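/- Let ρ, σ be positive definite n×n complex matrices and M a Hermitian matrix. Then the real function t ↦ tr((σ^{1/2}·(ρ+tM)·σ^{1/2})^{1/2}), defined for t in a neighborhood of 0 on which ρ+tM is positive definite, is differentiable at t = 0 with derivative (1/2)·tr(σ^{1/2}·(σ^{1/2}·ρ·σ^{1/2})^{-1/2}·σ^{1/2}·M). -/

import Mathlib

/-!
Write `A₀ = σ^{1/2} ρ σ^{1/2}`, `B = σ^{1/2} M σ^{1/2}` and `P = A₀^{1/2}`. Near `P` the square root
is the local inverse of `X ↦ X * X`, whose derivative at `P` is the Sylvester operator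
`H ↦ P H + H P`. This operator is injective, since a solution of `P H = -H P` commutes with `P²`,
hence with `P = √(P²)`. By the inverse function theorem the derivative of `t ↦ √(A₀ + t B)` at `0`
is the solution `Y` of `P Y + Y P = B`, and multiplying by `P⁻¹ = A₀^{-1/2}` and taking traces
gives `tr Y = ½ tr(A₀^{-1/2} B)`.
-/

open Matrix
open scoped ComplexOrder

/-- The real power `A^t` of a Hermitian matrix, via the continuous functional calculus. -/
noncomputable def matPow {n : Type*} [Fintype n] [DecidableEq n]
    (A : Matrix n n ℂ) (t : ℝ) : Matrix n n ℂ :=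
  cfc (fun x : ℝ => x ^ t) A

open Filter
open scoped Topology

section CStarAlgebra

variable {A : Type*} [CStarAlgebra A] [PartialOrder A] [StarOrderedRing A]

lemma IsStrictlyPositive.eventually_isStrictlyPositive {p : A} (hp : IsStrictlyPositive p) :
    ∀ᶠ x in 𝓝 p, IsSelfAdjoint x → IsStrictlyPositive x := by
  nontriviality A
  obtain ⟨c, hc, hcp⟩ := (CFC.exists_pos_algebraMap_le_iff hp.isSelfAdjoint).2
    fun x hx => hp.spectrum_pos hx
  filter_upwards [Metric.ball_mem_nhds p hc] with x hx hxsa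
  rw [Metric.mem_ball, dist_eq_norm] at hx
  refine (isStrictlyPositive_algebraMap (sub_pos.2 hx)).of_le ?_
  calc algebraMap ℝ A (c - ‖x - p‖) = algebraMap ℝ A c + -algebraMap ℝ A ‖x - p‖ := by
        rw [map_sub, sub_eq_add_neg]
    _ ≤ p + (x - p) := add_le_add hcp (hxsa.sub hp.isSelfAdjoint).neg_algebraMap_norm_le_self
    _ = x := add_sub_cancel p x

lemma IsStrictlyPositive.eq_zero_of_mul_add_mul_eq_zero {p h : A} (hp : IsStrictlyPositive p)
    (hph : p * h + h * p = 0) : h = 0 := by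
  have hsq : Commute (p * p) h := by
    have : p * h = -(h * p) := eq_neg_of_add_eq_zero_left hph
    rw [Commute, SemiconjBy, mul_assoc, this, mul_neg, ← mul_assoc, this, neg_mul, neg_neg,
      mul_assoc]
  have hcomm : Commute p h := by
    have := hsq.cfc_real Real.sqrt
    rwa [← cfcₙ_eq_cfc, ← CFC.sqrt_eq_real_sqrt _ (hp.isSelfAdjoint.mul_self_nonneg),
      CFC.sqrt_mul_self p hp.nonneg] at this
  have : (2 : ℝ) • (p * h) = 0 := by rw [two_smul]; nth_rw 2 [hcomm.eq]; exact hph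
  exact (hp.isUnit.mul_right_eq_zero).1 ((smul_eq_zero.1 this).resolve_left two_ne_zero)

variable [FiniteDimensional ℝ A]

lemma IsStrictlyPositive.exists_hasStrictFDerivAt_mul_self {p : A} (hp : IsStrictlyPositive p) :
    ∃ L : A ≃L[ℝ] A, (∀ h, L h = p * h + h * p) ∧
      HasStrictFDerivAt (fun x : A => x * x) (L : A →L[ℝ] A) p := by
  set S : A →ₗ[ℝ] A := LinearMap.mulLeft ℝ p + LinearMap.mulRight ℝ p
  have hS : Function.Injective S :=
    (injective_iff_map_eq_zero S).2 fun _ => hp.eq_zero_of_mul_add_mul_eq_zero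
  refine ⟨(LinearEquiv.ofInjectiveEndo S hS).toContinuousLinearEquiv, fun h => rfl, ?_⟩
  refine ((hasStrictFDerivAt_id p).mul' (hasStrictFDerivAt_id p)).congr_fderiv ?_
  ext h
  simp [S]

/- `CFC.sqrt` is junk off the nonnegative cone, so it agrees with the local inverse of squaring
only along paths that stay in the cone. -/
theorem IsStrictlyPositive.hasDerivAt_sqrt_comp {p v : A} (hp : IsStrictlyPositive p)
    {γ : ℝ → A} {t : ℝ} (hγ : HasDerivAt γ v t) (hγt : γ t = p * p)
    (hγ_nonneg : ∀ᶠ s in 𝓝 t, 0 ≤ γ s) :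
    ∃ y, p * y + y * p = v ∧ HasDerivAt (fun s => CFC.sqrt (γ s)) y t := by
  obtain ⟨L, hL, hsq⟩ := hp.exists_hasStrictFDerivAt_mul_self
  refine ⟨L.symm v, by rw [← hL, L.apply_symm_apply], ?_⟩
  have hinv := hsq.to_localInverse.hasFDerivAt
  rw [← hγt] at hinv
  refine (hinv.comp_hasDerivAt t hγ).congr_of_eventuallyEq ?_
  have hcont : Tendsto (fun s => CFC.sqrt (γ s)) (𝓝 t) (𝓝 p) := by
    have := CFC.continuousOn_sqrt.continuousWithinAt (hγt ▸ hp.isSelfAdjoint.mul_self_nonneg)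
    have := this.tendsto.comp (tendsto_nhdsWithin_iff.2 ⟨hγ.continuousAt.tendsto, hγ_nonneg⟩)
    rwa [hγt, CFC.sqrt_mul_self p hp.nonneg] at this
  filter_upwards [hcont.eventually hsq.eventually_left_inverse, hγ_nonneg] with s hs hs0
  rw [Function.comp_apply, ← hs, CFC.sqrt_mul_sqrt_self _ hs0]

end CStarAlgebra

section Matrix

variable {n : Type*} [Fintype n] [DecidableEq n]

open scoped MatrixOrder

lemma matPow_half_eq_sqrt {A : Matrix n n ℂ} (hA : 0 ≤ A) : matPow A (1 / 2) = CFC.sqrt A := by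
  rw [CFC.sqrt_eq_real_sqrt A hA, cfcₙ_eq_cfc, matPow]
  exact cfc_congr fun x _ => (Real.sqrt_eq_rpow x).symm

lemma matPow_mul_matPow {A : Matrix n n ℂ} (hA : A.PosDef) (s t : ℝ) :
    matPow A s * matPow A t = matPow A (s + t) := by
  rw [matPow, matPow, matPow, ← cfc_mul _ _ A (A.finite_real_spectrum.continuousOn _)
    (A.finite_real_spectrum.continuousOn _)]
  exact cfc_congr fun x hx => (Real.rpow_add (hA.isStrictlyPositive.spectrum_pos hx) s t).symm

lemma matPow_zero {A : Matrix n n ℂ} (hA : A.IsHermitian) : matPow A 0 = 1 := by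
  simp only [matPow, Real.rpow_zero]
  exact cfc_const_one ℝ A hA

end Matrix

lemma Matrix.trace_mul_add_mul_of_mul_eq_one {n R : Type*} [Fintype n] [DecidableEq n]
    [CommRing R] {P Q : Matrix n n R} (hQP : Q * P = 1) (Y : Matrix n n R) :
    (Q * (P * Y + Y * P)).trace = 2 * Y.trace := by
  rw [mul_add, trace_add, ← mul_assoc, ← mul_assoc, trace_mul_comm (Q * Y), ← mul_assoc,
    hQP, mul_eq_one_comm.1 hQP, one_mul, two_mul]

theorem fidelity_first_arg_deriv_general
    {n : Type*} [Fintype n] [DecidableEq n]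
    (ρ σ M : Matrix n n ℂ) (hρ : ρ.PosDef) (hσ : σ.PosDef) (hM : M.IsHermitian) :
    HasDerivAt
      (fun t : ℝ =>
        ((matPow (matPow σ (1/2) * (ρ + t • M) * matPow σ (1/2)) (1/2)).trace).re)
      ((1/2) *
        ((matPow σ (1/2) * matPow (matPow σ (1/2) * ρ * matPow σ (1/2)) (-(1/2))
          * matPow σ (1/2) * M).trace).re)
      0 := by
  open scoped MatrixOrder Matrix.Norms.L2Operator in
  set S := matPow σ (1 / 2) with hS_def
  have hS : IsStrictlyPositive S := by
    rw [hS_def, matPow_half_eq_sqrt hσ.posSemidef.nonneg]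
    exact hσ.isStrictlyPositive.sqrt
  set γ : ℝ → Matrix n n ℂ := fun t => S * (ρ + t • M) * S
  have hγ : HasDerivAt γ (S * M * S) 0 := by
    simpa using ((((hasDerivAt_id (0 : ℝ)).smul_const M).const_add ρ).const_mul S).mul_const S
  have hγ0 : γ 0 = S * ρ * S := by simp [γ]
  have hA₀ : IsStrictlyPositive (S * ρ * S) := by
    simpa [hS.isSelfAdjoint.star_eq] using
      (hS.isUnit.isStrictlyPositive_star_left_conjugate_iff).2 hρ.isStrictlyPositive
  have hγ_pos : ∀ᶠ t in 𝓝 0, IsStrictlyPositive (γ t) := by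
    refine (hγ.continuousAt.tendsto.eventually (hγ0 ▸ hA₀.eventually_isStrictlyPositive)).mono
      fun t ht => ht <|
        IsSelfAdjoint.conjugate_self (hρ.isHermitian.add (hM.smul (.all t))) hS.isSelfAdjoint
  obtain ⟨Y, hY, hd⟩ := hA₀.sqrt.hasDerivAt_sqrt_comp hγ
    (hγ0.trans (CFC.sqrt_mul_sqrt_self _ hA₀.nonneg).symm) (hγ_pos.mono fun _ h => h.nonneg)
  have hQP : matPow (S * ρ * S) (-(1/2)) * CFC.sqrt (S * ρ * S) = 1 := by
    rw [← matPow_half_eq_sqrt hA₀.nonneg, matPow_mul_matPow hA₀.posDef, neg_add_cancel,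
      matPow_zero hA₀.isSelfAdjoint]
  have htrace : (S * matPow (S * ρ * S) (-(1/2)) * S * M).trace = 2 * Y.trace := by
    rw [← Matrix.trace_mul_add_mul_of_mul_eq_one hQP, hY, mul_assoc, mul_assoc, trace_mul_comm,
      mul_assoc, mul_assoc]
  let ℓ : Matrix n n ℂ →L[ℝ] ℝ :=
    Complex.reCLM.comp (LinearMap.toContinuousLinearMap (traceLinearMap n ℝ ℂ))
  refine ((ℓ.hasFDerivAt.comp_hasDerivAt 0 hd).congr_of_eventuallyEq ?_).congr_deriv ?_
  · filter_upwards [hγ_pos] with t ht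
    rw [Function.comp_apply, ← matPow_half_eq_sqrt ht.nonneg]
    rfl
  · rw [htrace]
    simp [ℓ]

/-- The derivative of the fidelity in its first argument:
for positive definite `ρ, σ` and Hermitian `M`, the function
`t ↦ tr((σ^{1/2}(ρ+tM)σ^{1/2})^{1/2})` is differentiable at `t = 0` with derivative
`(1/2)·tr(σ^{1/2}(σ^{1/2}ρσ^{1/2})^{-1/2}σ^{1/2}·M)`. -/
theorem fidelity_first_arg_deriv
    {n : Type*} [Fintype n] [DecidableEq n] [Nonempty n]
    (ρ σ M : Matrix n n ℂ) (hρ : ρ.PosDef) (hσ : σ.PosDef) (hM : M.IsHermitian) :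
    HasDerivAt
      (fun t : ℝ =>
        ((matPow (matPow σ (1/2) * (ρ + t • M) * matPow σ (1/2)) (1/2)).trace).re)
      ((1/2) *
        ((matPow σ (1/2) * matPow (matPow σ (1/2) * ρ * matPow σ (1/2)) (-(1/2))
          * matPow σ (1/2) * M).trace).re)
      0 :=
  fidelity_first_arg_deriv_general ρ σ M hρ hσ hM
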